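/- arXiv:2512.02767 — 2 statements merged into one kernel-verified Lean document; each statement's English description precedes it below -/
import Mathlib

section
/- For any four jointly distributed random variables X, Y, Z, W on a finite probability space, H(Z|W) ≤ H(Z|X,W) + H(Z|Y,W) + I(X:Y|W). -/
open scoped BigOperators

namespace PaperIngleton

open Classical in
/-- Probability of an event under a pmf `p` on a finite sample space. -/
noncomputable def prob {Ω : Type*} [Fintype Ω] (p : Ω → ℝ) (E : Ω → Prop) : ℝ :=
  ∑ ω, if E ω then p ω else 0

/-- Shannon entropy of a finitely-valued random variable `X` under pmf `p`. -/
noncomputable def ent {Ω S : Type*} [Fintype Ω] [Fintype S] (p : Ω → ℝ) (X : Ω → S) : ℝ :=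
  -∑ s : S, prob p (fun ω => X ω = s) * Real.log (prob p (fun ω => X ω = s))

/-- Conditional entropy `H(X|Y)`. -/
noncomputable def condEnt {Ω S T : Type*} [Fintype Ω] [Fintype S] [Fintype T]
    (p : Ω → ℝ) (X : Ω → S) (Y : Ω → T) : ℝ :=
  ent p (fun ω => (X ω, Y ω)) - ent p Y

/-- Mutual information `I(X:Y)`. -/
noncomputable def mi {Ω S T : Type*} [Fintype Ω] [Fintype S] [Fintype T]
    (p : Ω → ℝ) (X : Ω → S) (Y : Ω → T) : ℝ :=
  ent p X + ent p Y - ent p (fun ω => (X ω, Y ω))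

/-- Conditional mutual information `I(X:Y|Z)`. -/
noncomputable def cmi {Ω S T U : Type*} [Fintype Ω] [Fintype S] [Fintype T] [Fintype U]
    (p : Ω → ℝ) (X : Ω → S) (Y : Ω → T) (Z : Ω → U) : ℝ :=
  ent p (fun ω => (X ω, Z ω)) + ent p (fun ω => (Y ω, Z ω))
    - ent p (fun ω => (X ω, Y ω, Z ω)) - ent p Z

end PaperIngleton

/-! Unfolding the definitions, the claim is `H(Z,W) + H(X,Y,W) ≤ H(Z,X,W) + H(Z,Y,W)`. It follows
from `I(X:Y|Z,W) ≥ 0` and `H(X,Y,W) ≤ H(X,Y,Z,W)`. Nonnegativity of conditional mutual information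
is Gibbs' inequality: for `r = P(x,z) P(y,z) / (P(x,y,z) P(z))`, the density of the conditionally
independent coupling against the joint law, `log r ≤ r - 1` and `∑ P(x,y,z) r ≤ ∑ P(z)`. -/

namespace PaperIngleton

open Real

section Probability

variable {Ω : Type*} [Fintype Ω] {p : Ω → ℝ}

lemma prob_nonneg (hp : ∀ ω, 0 ≤ p ω) (E : Ω → Prop) : 0 ≤ prob p E :=
  Finset.sum_nonneg fun ω _ => by split_ifs <;> simp [hp ω]

lemma prob_mono (hp : ∀ ω, 0 ≤ p ω) {E F : Ω → Prop} (h : ∀ ω, E ω → F ω) :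
    prob p E ≤ prob p F :=
  Finset.sum_le_sum fun ω _ => by
    by_cases hE : E ω
    · simp [hE, h ω hE]
    · split_ifs <;> simp [hp ω]

lemma le_prob (hp : ∀ ω, 0 ≤ p ω) {E : Ω → Prop} {ω : Ω} (h : E ω) : p ω ≤ prob p E := by
  classical
  unfold prob
  simpa [h] using Finset.single_le_sum (f := fun ω => if E ω then p ω else 0)
    (fun ω _ => by split_ifs <;> simp [hp ω]) (Finset.mem_univ ω)

lemma sum_mul_comp_eq {α : Type*} [Fintype α] (p : Ω → ℝ) (G : Ω → α) (F : α → ℝ) :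
    ∑ ω, p ω * F (G ω) = ∑ a, prob p (fun ω => G ω = a) * F a := by
  classical
  simp only [prob, Finset.sum_mul, ite_mul, zero_mul]
  rw [Finset.sum_comm]
  simp

lemma sum_prob_eq_sum {S : Type*} [Fintype S] (p : Ω → ℝ) (X : Ω → S) :
    ∑ s, prob p (fun ω => X ω = s) = ∑ ω, p ω := by
  simpa using (sum_mul_comp_eq p X fun _ => 1).symm

lemma sum_prob_pair_eq {S T : Type*} [Fintype S] [Fintype T] (p : Ω → ℝ) (X : Ω → S)
    (Y : Ω → T) (t : T) :
    ∑ s, prob p (fun ω => (X ω, Y ω) = (s, t)) = prob p (fun ω => Y ω = t) := by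
  classical
  simp only [prob, Prod.mk.injEq]
  rw [Finset.sum_comm]
  refine Finset.sum_congr rfl fun ω _ => ?_
  by_cases h : Y ω = t <;> simp [h]

end Probability

section Entropy

variable {Ω S T : Type*} [Fintype Ω] [Fintype S] [Fintype T] {p : Ω → ℝ}

lemma ent_eq_sum (p : Ω → ℝ) (X : Ω → S) :
    ent p X = -∑ ω, p ω * log (prob p (fun ω' => X ω' = X ω)) := by
  rw [ent, sum_mul_comp_eq p X fun s => log (prob p (fun ω => X ω = s))]

lemma ent_le_of_determines (hp : ∀ ω, 0 ≤ p ω) {X : Ω → S} {Y : Ω → T}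
    (h : ∀ ω ω', X ω' = X ω → Y ω' = Y ω) : ent p Y ≤ ent p X := by
  rw [ent_eq_sum, ent_eq_sum, neg_le_neg_iff]
  refine Finset.sum_le_sum fun ω _ => ?_
  rcases (hp ω).eq_or_lt with h0 | h0
  · simp [← h0]
  · exact mul_le_mul_of_nonneg_left
      (log_le_log (h0.trans_le (le_prob hp rfl)) (prob_mono hp (h ω))) (hp ω)

lemma ent_eq_of_eq_iff (p : Ω → ℝ) {X : Ω → S} {Y : Ω → T}
    (h : ∀ ω ω', X ω' = X ω ↔ Y ω' = Y ω) : ent p X = ent p Y := by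
  simp only [ent_eq_sum, h]

end Entropy

lemma log_add_log_sub_le {a b c d : ℝ} (ha : 0 < a) (hb : 0 < b) (hc : 0 < c) (hd : 0 < d) :
    log a + log b - log c - log d ≤ a * b / (c * d) - 1 := by
  have := log_le_sub_one_of_pos (show 0 < a * b / (c * d) by positivity)
  rw [log_div (by positivity) (by positivity), log_mul ha.ne' hb.ne', log_mul hc.ne' hd.ne']
    at this
  linarith

section CondMutualInfo

variable {Ω S T U : Type*} [Fintype Ω] [Fintype S] [Fintype T] [Fintype U] {p : Ω → ℝ}

lemma sum_mul_ratio_le (hp : ∀ ω, 0 ≤ p ω) (X : Ω → S) (Y : Ω → T) (Z : Ω → U) :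
    ∑ ω, p ω * (prob p (fun ω' => (X ω', Z ω') = (X ω, Z ω))
        * prob p (fun ω' => (Y ω', Z ω') = (Y ω, Z ω))
        / (prob p (fun ω' => (X ω', Y ω', Z ω') = (X ω, Y ω, Z ω))
          * prob p (fun ω' => Z ω' = Z ω))) ≤ ∑ ω, p ω := by
  set A : S × U → ℝ := fun v => prob p (fun ω => (X ω, Z ω) = v)
  set B : T × U → ℝ := fun v => prob p (fun ω => (Y ω, Z ω) = v)
  set C : S × T × U → ℝ := fun v => prob p (fun ω => (X ω, Y ω, Z ω) = v)
  set D : U → ℝ := fun z => prob p (fun ω => Z ω = z)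
  calc ∑ ω, p ω * (A (X ω, Z ω) * B (Y ω, Z ω) / (C (X ω, Y ω, Z ω) * D (Z ω)))
      = ∑ v : S × T × U, C v * (A (v.1, v.2.2) * B (v.2.1, v.2.2) / (C v * D v.2.2)) :=
        sum_mul_comp_eq p (fun ω => (X ω, Y ω, Z ω)) fun v =>
          A (v.1, v.2.2) * B (v.2.1, v.2.2) / (C v * D v.2.2)
    _ ≤ ∑ v : S × T × U, A (v.1, v.2.2) * B (v.2.1, v.2.2) / D v.2.2 := by
        refine Finset.sum_le_sum fun v _ => ?_
        rcases eq_or_ne (C v) 0 with h0 | h0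
        · rw [h0, zero_mul]
          exact div_nonneg (mul_nonneg (prob_nonneg hp _) (prob_nonneg hp _)) (prob_nonneg hp _)
        · rw [← div_div, mul_div_assoc', mul_div_cancel₀ _ h0]
    _ = ∑ z, (∑ x, A (x, z)) * (∑ y, B (y, z)) / D z := by
        simp only [Fintype.sum_prod_type, Finset.sum_mul_sum, Finset.sum_div]
        exact (Finset.sum_congr rfl fun _ _ => Finset.sum_comm).trans Finset.sum_comm
    _ = ∑ z, D z * D z / D z := by
        simp only [A, B, D, sum_prob_pair_eq]
    _ ≤ ∑ z, D z := Finset.sum_le_sum fun z _ => by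
        rw [mul_div_assoc]
        exact mul_le_of_le_one_right (prob_nonneg hp _) (div_self_le_one _)
    _ = ∑ ω, p ω := sum_prob_eq_sum p Z

theorem cmi_nonneg (hp : ∀ ω, 0 ≤ p ω) (X : Ω → S) (Y : Ω → T) (Z : Ω → U) :
    0 ≤ cmi p X Y Z := by
  set qXZ : Ω → ℝ := fun ω => prob p (fun ω' => (X ω', Z ω') = (X ω, Z ω))
  set qYZ : Ω → ℝ := fun ω => prob p (fun ω' => (Y ω', Z ω') = (Y ω, Z ω))
  set qXYZ : Ω → ℝ := fun ω => prob p (fun ω' => (X ω', Y ω', Z ω') = (X ω, Y ω, Z ω))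
  set qZ : Ω → ℝ := fun ω => prob p (fun ω' => Z ω' = Z ω)
  have hterm : ∀ ω, p ω * (log (qXZ ω) + log (qYZ ω) - log (qXYZ ω) - log (qZ ω)) ≤
      p ω * (qXZ ω * qYZ ω / (qXYZ ω * qZ ω)) - p ω := fun ω => by
    rcases (hp ω).eq_or_lt with h0 | h0
    · simp [← h0]
    · have hq {E : Ω → Prop} (h : E ω) : 0 < prob p E := h0.trans_le (le_prob hp h)
      rw [← mul_sub_one]
      exact mul_le_mul_of_nonneg_left (log_add_log_sub_le (hq rfl) (hq rfl) (hq rfl) (hq rfl))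
        (hp ω)
  have hsum := Finset.sum_le_sum (s := Finset.univ) fun ω _ => hterm ω
  simp only [mul_sub, mul_add, Finset.sum_sub_distrib, Finset.sum_add_distrib] at hsum
  rw [cmi, ent_eq_sum, ent_eq_sum, ent_eq_sum, ent_eq_sum]
  linarith [sum_mul_ratio_le hp X Y Z]

end CondMutualInfo

theorem stmt1_general {Ω S T U V : Type} [Fintype Ω] [Fintype S] [Fintype T] [Fintype U] [Fintype V]
    (p : Ω → ℝ) (hp : ∀ ω, 0 ≤ p ω)
    (X : Ω → S) (Y : Ω → T) (Z : Ω → U) (W : Ω → V) :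
    condEnt p Z W ≤ condEnt p Z (fun ω => (X ω, W ω))
      + condEnt p Z (fun ω => (Y ω, W ω)) + cmi p X Y W := by
  have hXZW : ent p (fun ω => (Z ω, X ω, W ω)) = ent p (fun ω => (X ω, Z ω, W ω)) :=
    ent_eq_of_eq_iff p fun _ _ => by simp only [Prod.mk.injEq]; tauto
  have hYZW : ent p (fun ω => (Z ω, Y ω, W ω)) = ent p (fun ω => (Y ω, Z ω, W ω)) :=
    ent_eq_of_eq_iff p fun _ _ => by simp only [Prod.mk.injEq]; tauto
  have hXYW : ent p (fun ω => (X ω, Y ω, W ω)) ≤ ent p (fun ω => (X ω, Y ω, Z ω, W ω)) :=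
    ent_le_of_determines hp fun _ _ => by simp only [Prod.mk.injEq]; tauto
  have hcmi := cmi_nonneg hp X Y fun ω => (Z ω, W ω)
  simp only [condEnt, cmi] at hcmi ⊢
  linarith

theorem stmt1 {Ω S T U V : Type} [Fintype Ω] [Fintype S] [Fintype T] [Fintype U] [Fintype V]
    (p : Ω → ℝ) (hp : ∀ ω, 0 ≤ p ω) (hp1 : ∑ ω, p ω = 1)
    (X : Ω → S) (Y : Ω → T) (Z : Ω → U) (W : Ω → V) :
    condEnt p Z W ≤ condEnt p Z (fun ω => (X ω, W ω))
      + condEnt p Z (fun ω => (Y ω, W ω)) + cmi p X Y W :=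
  stmt1_general p hp X Y Z W

end PaperIngleton
end

section
/- Symmetrization: Let (X₀,…,X_{n−1}, A, B) be finitely-valued random variables where A takes values in a finite set 𝒜 and B in a finite set ℬ, with 𝒜 and ℬ disjoint. Then there exist jointly distributed (X₀,…,X_{n−1}, Ā, B̄), with Ā, B̄ valued in 𝒜 ∪ ℬ, whose joint law is invariant under swapping Ā and B̄, and such that for every subset J of indices: H(X_J, Ā) = H(X_J, B̄) = ½(H(X_J, A) + H(X_J, B)) + log 2 and H(X_J, Ā, B̄) = H(X_J, A, B) + log 2. -/
/-!
Toss an independent fair coin `c` and put `(Ā, B̄) = (A, B)` if `c` is heads and `(B, A)` if it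
is tails. Flipping the coin swaps `Ā` and `B̄` and preserves the law, so the joint law is
swap-invariant. Since `𝒜` and `ℬ` are disjoint, the value of `(X_J, Ā)` (and of `(X_J, Ā, B̄)`)
determines the coin, so its law is the half-half mixture of two laws with disjoint supports,
whose entropy is the average of the two entropies plus `log 2`.
-/

open scoped BigOperators

namespace PaperIngleton

open Real

section Entropy

variable {Ω : Type*} [Fintype Ω] (p : Ω → ℝ)

lemma prob_congr {E F : Ω → Prop} (h : ∀ ω, E ω ↔ F ω) : prob p E = prob p F := by
  obtain rfl : E = F := funext fun ω => propext (h ω)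
  rfl

lemma prob_eq_zero_of_forall_not {E : Ω → Prop} (h : ∀ ω, ¬ E ω) : prob p E = 0 :=
  Finset.sum_eq_zero fun ω _ => if_neg (h ω)

lemma sum_prob_eq_one {S : Type*} [Fintype S] (hp1 : ∑ ω, p ω = 1) (Z : Ω → S) :
    ∑ s, prob p (fun ω => Z ω = s) = 1 := by
  classical
  unfold prob
  rw [Finset.sum_comm]
  simpa using hp1

lemma ent_eq_sum_negMulLog {S : Type*} [Fintype S] (Z : Ω → S) :
    ent p Z = ∑ s, negMulLog (prob p (fun ω => Z ω = s)) := by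
  simp only [ent, negMulLog, neg_mul, Finset.sum_neg_distrib]

lemma ent_comp_of_injective {T V : Type*} [Fintype T] [Fintype V]
    (W : Ω → T) {ι : T → V} (hι : Function.Injective ι) :
    ent p (fun ω => ι (W ω)) = ent p W := by
  classical
  simp only [ent_eq_sum_negMulLog]
  rw [← Finset.sum_subset (Finset.subset_univ (Finset.univ.image ι)),
    Finset.sum_image fun x _ y _ h => hι h]
  · exact Finset.sum_congr rfl fun t _ => congrArg negMulLog <|
      prob_congr p fun ω => hι.eq_iff
  · intro v _ hv
    rw [prob_eq_zero_of_forall_not p fun ω (h : ι (W ω) = v) =>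
      hv (h ▸ Finset.mem_image_of_mem ι (Finset.mem_univ (W ω))), negMulLog_zero]

end Entropy

noncomputable def withFairCoin {Ω : Type*} (p : Ω → ℝ) : Ω × Bool → ℝ :=
  fun ωc => p ωc.1 / 2

lemma withFairCoin_nonneg {Ω : Type*} {p : Ω → ℝ} (hp : ∀ ω, 0 ≤ p ω) (ωc : Ω × Bool) :
    0 ≤ withFairCoin p ωc :=
  div_nonneg (hp ωc.1) zero_le_two

section FairCoin

variable {Ω : Type*} [Fintype Ω] (p : Ω → ℝ)

lemma sum_withFairCoin : ∑ ωc, withFairCoin p ωc = ∑ ω, p ω := by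
  simp only [withFairCoin, Fintype.sum_prod_type, Fintype.sum_bool, add_halves]

lemma prob_withFairCoin (E : Ω × Bool → Prop) :
    prob (withFairCoin p) E
      = (prob p (fun ω => E (ω, true)) + prob p (fun ω => E (ω, false))) / 2 := by
  classical
  simp only [prob, withFairCoin, Fintype.sum_prod_type, Fintype.sum_bool,
    ← Finset.sum_add_distrib, Finset.sum_div]
  refine Finset.sum_congr rfl fun ω _ => ?_
  split_ifs <;> ring

lemma prob_withFairCoin_comp_not (E : Ω × Bool → Prop) :
    prob (withFairCoin p) (fun ωc => E (ωc.1, !ωc.2)) = prob (withFairCoin p) E := by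
  simp only [prob_withFairCoin, Bool.not_true, Bool.not_false]
  ring

lemma ent_withFairCoin_comp_not {V : Type*} [Fintype V] (Z : Ω × Bool → V) :
    ent (withFairCoin p) (fun ωc => Z (ωc.1, !ωc.2)) = ent (withFairCoin p) Z := by
  simp only [ent]
  congr 1
  exact Finset.sum_congr rfl fun v _ =>
    congrArg (fun q => q * log q) (prob_withFairCoin_comp_not p (fun ωc => Z ωc = v))

lemma negMulLog_add_div_two_of_eq_zero_or_eq_zero {x y : ℝ} (h : x = 0 ∨ y = 0) :
    negMulLog ((x + y) / 2) = (negMulLog x + negMulLog y) / 2 + (x + y) / 2 * log 2 := by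
  have half (z : ℝ) : negMulLog (z / 2) = negMulLog z / 2 + z / 2 * log 2 := by
    rw [div_eq_mul_inv, negMulLog_mul]
    simp only [negMulLog, log_inv]
    ring
  rcases h with rfl | rfl <;> simp [half]

lemma ent_withFairCoin_of_disjoint (hp1 : ∑ ω, p ω = 1) {V : Type*} [Fintype V]
    (Z : Ω × Bool → V) (hZ : ∀ ω ω', Z (ω, true) ≠ Z (ω', false)) :
    ent (withFairCoin p) Z
      = (ent p (fun ω => Z (ω, true)) + ent p (fun ω => Z (ω, false))) / 2 + log 2 := by
  set q : Bool → V → ℝ := fun c v => prob p (fun ω => Z (ω, c) = v)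
  have hq : ∀ v, q true v = 0 ∨ q false v = 0 := by
    intro v
    by_cases h : ∃ ω', Z (ω', false) = v
    · obtain ⟨ω', rfl⟩ := h
      exact .inl <| prob_eq_zero_of_forall_not p fun ω => hZ ω ω'
    · exact .inr <| prob_eq_zero_of_forall_not p fun ω h' => h ⟨ω, h'⟩
  have hsum (c : Bool) : ∑ v, q c v = 1 := sum_prob_eq_one p hp1 _
  simp only [ent_eq_sum_negMulLog, prob_withFairCoin]
  change ∑ v, negMulLog ((q true v + q false v) / 2)
    = (∑ v, negMulLog (q true v) + ∑ v, negMulLog (q false v)) / 2 + log 2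
  simp only [negMulLog_add_div_two_of_eq_zero_or_eq_zero (hq _), Finset.sum_add_distrib,
    ← Finset.sum_div, ← Finset.sum_mul, hsum]
  ring

end FairCoin

/-- This is `Ā`; `B̄` is `coinSelect A B` evaluated on the flipped coin. -/
def coinSelect {Ω α β : Type*} (A : Ω → α) (B : Ω → β) (ωc : Ω × Bool) : α ⊕ β :=
  cond ωc.2 (.inl (A ωc.1)) (.inr (B ωc.1))

section CoinSelect

variable {Ω α β : Type*} [Fintype Ω] (p : Ω → ℝ) (A : Ω → α) (B : Ω → β)

lemma prob_withFairCoin_coinSelect_swap (E : Ω → α ⊕ β → α ⊕ β → Prop) :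
    prob (withFairCoin p) (fun ωc => E ωc.1 (coinSelect A B ωc) (coinSelect A B (ωc.1, !ωc.2)))
      = prob (withFairCoin p)
          (fun ωc => E ωc.1 (coinSelect A B (ωc.1, !ωc.2)) (coinSelect A B ωc)) := by
  rw [← prob_withFairCoin_comp_not p]
  simp only [Bool.not_not]

variable {T : Type*} [Fintype T] [Fintype α] [Fintype β] (W : Ω → T)

lemma ent_withFairCoin_coinSelect (hp1 : ∑ ω, p ω = 1) :
    ent (withFairCoin p) (fun ωc => (W ωc.1, coinSelect A B ωc))
      = (ent p (fun ω => (W ω, A ω)) + ent p (fun ω => (W ω, B ω))) / 2 + log 2 := by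
  rw [ent_withFairCoin_of_disjoint p hp1 _ fun ω ω' h => Sum.inl_ne_inr (congrArg Prod.snd h),
    ← ent_comp_of_injective p (fun ω => (W ω, A ω))
      (Function.injective_id.prodMap (Sum.inl_injective (β := β))),
    ← ent_comp_of_injective p (fun ω => (W ω, B ω))
      (Function.injective_id.prodMap (Sum.inr_injective (α := α)))]
  rfl

lemma ent_withFairCoin_coinSelect_pair (hp1 : ∑ ω, p ω = 1) :
    ent (withFairCoin p)
        (fun ωc => (W ωc.1, coinSelect A B ωc, coinSelect A B (ωc.1, !ωc.2)))
      = ent p (fun ω => (W ω, A ω, B ω)) + log 2 := by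
  have heads : ent p (fun ω => (W ω, coinSelect A B (ω, true), coinSelect A B (ω, false)))
      = ent p (fun ω => (W ω, A ω, B ω)) :=
    ent_comp_of_injective p (fun ω => (W ω, A ω, B ω))
      (ι := Prod.map id (Prod.map Sum.inl Sum.inr))
      (Function.injective_id.prodMap (Sum.inl_injective.prodMap Sum.inr_injective))
  have tails : ent p (fun ω => (W ω, coinSelect A B (ω, false), coinSelect A B (ω, true)))
      = ent p (fun ω => (W ω, A ω, B ω)) :=
    ent_comp_of_injective p (fun ω => (W ω, A ω, B ω))
      (ι := Prod.map id (Prod.map Sum.inr Sum.inl ∘ Prod.swap))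
      (Function.injective_id.prodMap
        ((Sum.inr_injective.prodMap Sum.inl_injective).comp Prod.swap_injective))
  rw [ent_withFairCoin_of_disjoint p hp1 _ fun ω ω' h => Sum.inl_ne_inr (congrArg (·.2.1) h)]
  simp only [Bool.not_true, Bool.not_false, heads, tails, add_self_div_two]

end CoinSelect

/-- Symmetrization lemma. Disjointness of the alphabets `𝒜` and `ℬ` is modeled
by taking `Ā, B̄` valued in the sum type `α ⊕ β`. -/
theorem stmt10 {Ω : Type} [Fintype Ω] {n : ℕ} {S : Fin n → Type} [∀ i, Fintype (S i)]
    {α β : Type} [Fintype α] [Fintype β]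
    (p : Ω → ℝ) (hp : ∀ ω, 0 ≤ p ω) (hp1 : ∑ ω, p ω = 1)
    (X : (i : Fin n) → Ω → S i) (A : Ω → α) (B : Ω → β) :
    ∃ (Ω' : Type) (_ : Fintype Ω') (p' : Ω' → ℝ)
      (X' : (i : Fin n) → Ω' → S i) (Abar Bbar : Ω' → α ⊕ β),
      (∀ ω, 0 ≤ p' ω) ∧ (∑ ω, p' ω = 1) ∧
      -- the joint law is invariant under swapping Ā and B̄
      (∀ (v : (i : Fin n) → S i) (a b : α ⊕ β),
        prob p' (fun ω => (∀ i, X' i ω = v i) ∧ Abar ω = a ∧ Bbar ω = b)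
        = prob p' (fun ω => (∀ i, X' i ω = v i) ∧ Abar ω = b ∧ Bbar ω = a)) ∧
      -- entropy identities for every subcollection X_J
      (∀ J : Finset (Fin n),
        ent p' (fun ω => ((fun i : J => X' i.1 ω), Abar ω))
          = ent p' (fun ω => ((fun i : J => X' i.1 ω), Bbar ω)) ∧
        ent p' (fun ω => ((fun i : J => X' i.1 ω), Abar ω))
          = (ent p (fun ω => ((fun i : J => X i.1 ω), A ω))
             + ent p (fun ω => ((fun i : J => X i.1 ω), B ω))) / 2 + Real.log 2 ∧
        ent p' (fun ω => ((fun i : J => X' i.1 ω), Abar ω, Bbar ω))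
          = ent p (fun ω => ((fun i : J => X i.1 ω), A ω, B ω)) + Real.log 2) := by
  refine ⟨Ω × Bool, inferInstance, withFairCoin p, fun i ωc => X i ωc.1, coinSelect A B,
    fun ωc => coinSelect A B (ωc.1, !ωc.2), withFairCoin_nonneg hp, (sum_withFairCoin p).trans hp1,
    fun v a b => ?_, fun J => ⟨(ent_withFairCoin_comp_not p _).symm,
      ent_withFairCoin_coinSelect p A B (fun ω (i : J) => X i ω) hp1,
      ent_withFairCoin_coinSelect_pair p A B (fun ω (i : J) => X i ω) hp1⟩⟩
  exact (prob_withFairCoin_coinSelect_swap p A B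
      fun ω a' b' => (∀ i, X i ω = v i) ∧ a' = a ∧ b' = b).trans
    (prob_congr _ fun _ => and_congr_right' and_comm)

end PaperIngleton
end
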